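/- Let Q₁ := convexHull{0, ½w, −½v, m₁}. Then ½v + Q₁ ⊆ V and −½w + Q₁ ⊆ V. -/
import Mathlib


/-!
STATEMENT 15: For the hexagonal Voronoi cell `V` of `𝖯 = ℤu + ℤv` (strictly obtuse
superbasis `u, v, w = −u−v`) and `Q₁ := convexHull{0, ½w, −½v, m₁}`, one has
`½v + Q₁ ⊆ V` and `−½w + Q₁ ⊆ V`.
-/

noncomputable section

/-- The standard inner product on `ℝ × ℝ`. -/
def ip (x y : ℝ × ℝ) : ℝ := x.1 * y.1 + x.2 * y.2

/-- The lattice `ℤu + ℤv` as a subset of `ℝ × ℝ`. -/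
def lat (u v : ℝ × ℝ) : Set (ℝ × ℝ) :=
  {p | ∃ m n : ℤ, p = (m : ℝ) • u + (n : ℝ) • v}

/-- The Voronoi cell of the lattice `ℤu + ℤv` around the origin. -/
def vorCell (u v : ℝ × ℝ) : Set (ℝ × ℝ) :=
  {y | ∀ p ∈ lat u v, ip y y ≤ ip (y - p) (y - p)}

lemma consecR (k : ℤ) : 0 ≤ (k:ℝ) * ((k:ℝ) - 1) := by
  rcases le_or_gt k 0 with h | h
  · have h' : (k:ℝ) ≤ 0 := by exact_mod_cast h
    nlinarith
  · have h' : (1:ℝ) ≤ (k:ℝ) := by exact_mod_cast h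
    nlinarith

set_option maxHeartbeats 1000000 in
lemma key (a b c s t : ℝ) (hb : b < 0) (hab : 0 < a + b) (hbc : 0 < b + c)
    (hs : |2*s| ≤ a) (ht : |2*t| ≤ c) (hst : |2*(s+t)| ≤ a+2*b+c) (m n : ℤ) :
    2*((m:ℝ)*s + (n:ℝ)*t) ≤ a*(m:ℝ)^2 + 2*b*(m:ℝ)*(n:ℝ) + c*(n:ℝ)^2 := by
  obtain ⟨hs1, hs2⟩ := abs_le.1 hs
  obtain ⟨ht1, ht2⟩ := abs_le.1 ht
  obtain ⟨he1, he2⟩ := abs_le.1 hst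
  have ha : 0 < a := by linarith
  have hc : 0 < c := by linarith
  have he : 0 < a + 2*b + c := by linarith
  rcases le_total m 0 with hm | hm <;> rcases le_total n 0 with hn | hn
  · -- m ≤ 0, n ≤ 0
    have hM : (m:ℝ) ≤ 0 := by exact_mod_cast hm
    have hN : (n:ℝ) ≤ 0 := by exact_mod_cast hn
    rcases le_total n m with hmn | hmn
    · have hMN : (n:ℝ) ≤ (m:ℝ) := by exact_mod_cast hmn
      have p1 := consecR (m+1)
      push_cast at p1
      have p2 := consecR (m-n)
      push_cast at p2
      nlinarith [mul_nonneg (neg_nonneg.2 hM) (sub_nonneg.2 hMN),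
        mul_nonneg (mul_nonneg (neg_nonneg.2 hM) (sub_nonneg.2 hMN)) hbc.le,
        mul_nonneg p1 he.le, mul_nonneg p2 hc.le,
        mul_nonneg (sub_nonneg.2 hMN) (by linarith : (0:ℝ) ≤ c + 2*t),
        mul_nonneg (neg_nonneg.2 hM) (by linarith : (0:ℝ) ≤ (a+2*b+c) + 2*(s+t))]
    · have hMN : (m:ℝ) ≤ (n:ℝ) := by exact_mod_cast hmn
      have p1 := consecR (n+1)
      push_cast at p1
      have p2 := consecR (n-m)
      push_cast at p2
      nlinarith [mul_nonneg (neg_nonneg.2 hN) (sub_nonneg.2 hMN),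
        mul_nonneg (mul_nonneg (neg_nonneg.2 hN) (sub_nonneg.2 hMN)) hab.le,
        mul_nonneg p1 he.le, mul_nonneg p2 ha.le,
        mul_nonneg (sub_nonneg.2 hMN) (by linarith : (0:ℝ) ≤ a + 2*s),
        mul_nonneg (neg_nonneg.2 hN) (by linarith : (0:ℝ) ≤ (a+2*b+c) + 2*(s+t))]
  · -- m ≤ 0 ≤ n
    have hM : (m:ℝ) ≤ 0 := by exact_mod_cast hm
    have hN : (0:ℝ) ≤ (n:ℝ) := by exact_mod_cast hn
    have p1 := consecR (m+1)
    push_cast at p1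
    have p2 := consecR n
    push_cast at p2
    nlinarith [mul_nonneg p1 ha.le, mul_nonneg p2 hc.le,
      mul_nonneg (mul_nonneg (neg_nonneg.2 hM) hN) (neg_nonneg.2 hb.le),
      mul_nonneg (neg_nonneg.2 hM) (by linarith : (0:ℝ) ≤ a + 2*s),
      mul_nonneg hN (by linarith : (0:ℝ) ≤ c - 2*t)]
  · -- n ≤ 0 ≤ m
    have hM : (0:ℝ) ≤ (m:ℝ) := by exact_mod_cast hm
    have hN : (n:ℝ) ≤ 0 := by exact_mod_cast hn
    have p1 := consecR (n+1)
    push_cast at p1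
    have p2 := consecR m
    push_cast at p2
    nlinarith [mul_nonneg p1 hc.le, mul_nonneg p2 ha.le,
      mul_nonneg (mul_nonneg hM (neg_nonneg.2 hN)) (neg_nonneg.2 hb.le),
      mul_nonneg (neg_nonneg.2 hN) (by linarith : (0:ℝ) ≤ c + 2*t),
      mul_nonneg hM (by linarith : (0:ℝ) ≤ a - 2*s)]
  · -- 0 ≤ m, 0 ≤ n
    have hM : (0:ℝ) ≤ (m:ℝ) := by exact_mod_cast hm
    have hN : (0:ℝ) ≤ (n:ℝ) := by exact_mod_cast hn
    rcases le_total m n with hmn | hmn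
    · have hMN : (m:ℝ) ≤ (n:ℝ) := by exact_mod_cast hmn
      have p1 := consecR m
      push_cast at p1
      have p2 := consecR (n-m)
      push_cast at p2
      nlinarith [mul_nonneg (mul_nonneg hM (sub_nonneg.2 hMN)) hbc.le,
        mul_nonneg p1 he.le, mul_nonneg p2 hc.le,
        mul_nonneg (sub_nonneg.2 hMN) (by linarith : (0:ℝ) ≤ c - 2*t),
        mul_nonneg hM (by linarith : (0:ℝ) ≤ (a+2*b+c) - 2*(s+t))]
    · have hMN : (n:ℝ) ≤ (m:ℝ) := by exact_mod_cast hmn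
      have p1 := consecR n
      push_cast at p1
      have p2 := consecR (m-n)
      push_cast at p2
      nlinarith [mul_nonneg (mul_nonneg hN (sub_nonneg.2 hMN)) hab.le,
        mul_nonneg p1 he.le, mul_nonneg p2 ha.le,
        mul_nonneg (sub_nonneg.2 hMN) (by linarith : (0:ℝ) ≤ a - 2*s),
        mul_nonneg hN (by linarith : (0:ℝ) ≤ (a+2*b+c) - 2*(s+t))]

/-- If `y` satisfies the three hexagon inequalities, it lies in the Voronoi cell. -/
lemma hex_mem (u v y : ℝ × ℝ)
    (huv : ip u v < 0) (huw : ip u (-u-v) < 0) (hvw : ip v (-u-v) < 0)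
    (h1 : |2 * ip y u| ≤ ip u u) (h2 : |2 * ip y v| ≤ ip v v)
    (h3 : |2 * ip y (-u-v)| ≤ ip (-u-v) (-u-v)) : y ∈ vorCell u v := by
  rintro p ⟨m, n, rfl⟩
  have hab : 0 < ip u u + ip u v := by
    have h : ip u (-u-v) = -(ip u u) - ip u v := by simp [ip]; try ring
    rw [h] at huw; linarith
  have hbc : 0 < ip u v + ip v v := by
    have h : ip v (-u-v) = -(ip u v) - ip v v := by simp [ip]; try ring
    rw [h] at hvw; linarith
  have hyw : ip y (-u-v) = -(ip y u + ip y v) := by simp [ip]; try ring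
  have hww : ip (-u-v) (-u-v) = ip u u + 2 * ip u v + ip v v := by simp [ip]; try ring
  rw [hyw, hww] at h3
  have h3' : |2 * (ip y u + ip y v)| ≤ ip u u + 2 * ip u v + ip v v := by
    rwa [mul_neg, abs_neg] at h3
  have K := key (ip u u) (ip u v) (ip v v) (ip y u) (ip y v) huv hab hbc h1 h2 h3' m n
  have expand : ip (y - ((m:ℝ) • u + (n:ℝ) • v)) (y - ((m:ℝ) • u + (n:ℝ) • v))
      = ip y y - 2*((m:ℝ) * ip y u + (n:ℝ) * ip y v)
        + ((ip u u)*(m:ℝ)^2 + 2*(ip u v)*(m:ℝ)*(n:ℝ) + (ip v v)*(n:ℝ)^2) := by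
    simp [ip]; try ring
  rw [expand]; linarith

lemma ip_add_left (x y z : ℝ × ℝ) : ip (x + y) z = ip x z + ip y z := by
  simp [ip]; try ring

lemma convex_slab (τ z : ℝ × ℝ) (r : ℝ) :
    Convex ℝ {x : ℝ × ℝ | |2 * ip (τ + x) z| ≤ r} := by
  intro x hx y hy p q hp hq hpq
  simp only [Set.mem_setOf_eq] at hx hy ⊢
  have hid : 2 * ip (τ + (p • x + q • y)) z
      = p * (2 * ip (τ + x) z) + q * (2 * ip (τ + y) z) := by
    simp only [ip, Prod.fst_add, Prod.snd_add, Prod.smul_fst, Prod.smul_snd,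
      smul_eq_mul]
    linear_combination (-2 * (τ.1 * z.1 + τ.2 * z.2)) * hpq
  have b1 : |p * (2 * ip (τ + x) z)| ≤ p * r := by
    rw [abs_mul, abs_of_nonneg hp]; exact mul_le_mul_of_nonneg_left hx hp
  have b2 : |q * (2 * ip (τ + y) z)| ≤ q * r := by
    rw [abs_mul, abs_of_nonneg hq]; exact mul_le_mul_of_nonneg_left hy hq
  rw [hid]
  calc |p * (2 * ip (τ + x) z) + q * (2 * ip (τ + y) z)|
      ≤ |p * (2 * ip (τ + x) z)| + |q * (2 * ip (τ + y) z)| := abs_add_le _ _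
    _ ≤ p * r + q * r := add_le_add b1 b2
    _ = r := by rw [← add_mul, hpq, one_mul]

theorem translate_of_Q1_in_voronoi_cell
    (u v w : ℝ × ℝ) (hw : w = -u - v)
    (huv : ip u v < 0) (huw : ip u w < 0) (hvw : ip v w < 0)
    (m₁ : ℝ × ℝ) (hm₁ : ip m₁ w = ip w w / 2 ∧ ip m₁ v = -(ip v v / 2)) :
    ∀ x ∈ convexHull ℝ ({0, (1 / 2 : ℝ) • w, -((1 / 2 : ℝ) • v), m₁} : Set (ℝ × ℝ)),
      (1 / 2 : ℝ) • v + x ∈ vorCell u v ∧ -((1 / 2 : ℝ) • w) + x ∈ vorCell u v := by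
  subst hw
  obtain ⟨hm1w, hm1v⟩ := hm₁
  have hb : ip u v < 0 := huv
  have hab : 0 < ip u u + ip u v := by
    have h : ip u (-u-v) = -(ip u u) - ip u v := by simp [ip]; try ring
    have h2 := huw; rw [h] at h2; linarith
  have hbc : 0 < ip u v + ip v v := by
    have h : ip v (-u-v) = -(ip u v) - ip v v := by simp [ip]; try ring
    have h2 := hvw; rw [h] at h2; linarith
  have ha : 0 < ip u u := by linarith
  have hc : 0 < ip v v := by linarith
  have hE : ip (-u-v) (-u-v) = ip u u + 2 * ip u v + ip v v := by simp [ip]; try ring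
  have hm1u' : 2 * ip m₁ u = -(ip u u) - 2 * ip u v := by
    have h : ip m₁ u = -(ip m₁ v) - ip m₁ (-u-v) := by simp [ip]; try ring
    rw [h, hm1v, hm1w, hE]; ring
  have hm1v' : 2 * ip m₁ v = -(ip v v) := by rw [hm1v]; ring
  have hm1w' : 2 * ip m₁ (-u-v) = ip u u + 2 * ip u v + ip v v := by
    rw [hm1w, hE]; ring
  set S : Set (ℝ × ℝ) :=
    ({x | |2 * ip ((1/2:ℝ) • v + x) u| ≤ ip u u} ∩
     {x | |2 * ip ((1/2:ℝ) • v + x) v| ≤ ip v v} ∩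
     {x | |2 * ip ((1/2:ℝ) • v + x) (-u-v)| ≤ ip (-u-v) (-u-v)}) ∩
    ({x | |2 * ip (-((1/2:ℝ) • (-u-v)) + x) u| ≤ ip u u} ∩
     {x | |2 * ip (-((1/2:ℝ) • (-u-v)) + x) v| ≤ ip v v} ∩
     {x | |2 * ip (-((1/2:ℝ) • (-u-v)) + x) (-u-v)| ≤ ip (-u-v) (-u-v)}) with hS
  have hconv : Convex ℝ S := by
    exact (((convex_slab _ _ _).inter (convex_slab _ _ _)).inter
      (convex_slab _ _ _)).inter
      (((convex_slab _ _ _).inter (convex_slab _ _ _)).inter (convex_slab _ _ _))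
  have hpts : ({0, (1 / 2 : ℝ) • (-u-v), -((1 / 2 : ℝ) • v), m₁} : Set (ℝ × ℝ)) ⊆ S := by
    intro y hy
    simp only [Set.mem_insert_iff, Set.mem_singleton_iff] at hy
    rcases hy with rfl | rfl | rfl | rfl
    · refine ⟨⟨⟨?_, ?_⟩, ?_⟩, ⟨?_, ?_⟩, ?_⟩ <;> simp only [Set.mem_setOf_eq]
      · have hval : 2 * ip ((1/2:ℝ) • v + (0:ℝ×ℝ)) u = ip u v := by simp [ip]; try ring
        rw [hval, abs_le]; constructor <;> linarith
      · have hval : 2 * ip ((1/2:ℝ) • v + (0:ℝ×ℝ)) v = ip v v := by simp [ip]; try ring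
        rw [hval, abs_le]; constructor <;> linarith
      · have hval : 2 * ip ((1/2:ℝ) • v + (0:ℝ×ℝ)) (-u-v)
            = -(ip u v) - ip v v := by simp [ip]; try ring
        rw [hval, abs_le]; constructor <;> linarith
      · have hval : 2 * ip (-((1/2:ℝ) • (-u-v)) + (0:ℝ×ℝ)) u
            = ip u u + ip u v := by simp [ip]; try ring
        rw [hval, abs_le]; constructor <;> linarith
      · have hval : 2 * ip (-((1/2:ℝ) • (-u-v)) + (0:ℝ×ℝ)) v
            = ip u v + ip v v := by simp [ip]; try ring
        rw [hval, abs_le]; constructor <;> linarith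
      · have hval : 2 * ip (-((1/2:ℝ) • (-u-v)) + (0:ℝ×ℝ)) (-u-v)
            = -(ip u u) - 2*ip u v - ip v v := by simp [ip]; try ring
        rw [hval, abs_le]; constructor <;> linarith
    · refine ⟨⟨⟨?_, ?_⟩, ?_⟩, ⟨?_, ?_⟩, ?_⟩ <;> simp only [Set.mem_setOf_eq]
      · have hval : 2 * ip ((1/2:ℝ) • v + (1/2:ℝ) • (-u-v)) u = -(ip u u) := by
          simp [ip]; try ring
        rw [hval, abs_le]; constructor <;> linarith
      · have hval : 2 * ip ((1/2:ℝ) • v + (1/2:ℝ) • (-u-v)) v = -(ip u v) := by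
          simp [ip]; try ring
        rw [hval, abs_le]; constructor <;> linarith
      · have hval : 2 * ip ((1/2:ℝ) • v + (1/2:ℝ) • (-u-v)) (-u-v)
            = ip u u + ip u v := by simp [ip]; try ring
        rw [hval, abs_le]; constructor <;> linarith
      · have hval : 2 * ip (-((1/2:ℝ) • (-u-v)) + (1/2:ℝ) • (-u-v)) u = 0 := by
          simp [ip]; try ring
        rw [hval, abs_le]; constructor <;> linarith
      · have hval : 2 * ip (-((1/2:ℝ) • (-u-v)) + (1/2:ℝ) • (-u-v)) v = 0 := by
          simp [ip]; try ring
        rw [hval, abs_le]; constructor <;> linarith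
      · have hval : 2 * ip (-((1/2:ℝ) • (-u-v)) + (1/2:ℝ) • (-u-v)) (-u-v) = 0 := by
          simp [ip]; try ring
        rw [hval, abs_le]; constructor <;> linarith
    · refine ⟨⟨⟨?_, ?_⟩, ?_⟩, ⟨?_, ?_⟩, ?_⟩ <;> simp only [Set.mem_setOf_eq]
      · have hval : 2 * ip ((1/2:ℝ) • v + -((1/2:ℝ) • v)) u = 0 := by simp [ip]; try ring
        rw [hval, abs_le]; constructor <;> linarith
      · have hval : 2 * ip ((1/2:ℝ) • v + -((1/2:ℝ) • v)) v = 0 := by simp [ip]; try ring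
        rw [hval, abs_le]; constructor <;> linarith
      · have hval : 2 * ip ((1/2:ℝ) • v + -((1/2:ℝ) • v)) (-u-v) = 0 := by
          simp [ip]; try ring
        rw [hval, abs_le]; constructor <;> linarith
      · have hval : 2 * ip (-((1/2:ℝ) • (-u-v)) + -((1/2:ℝ) • v)) u = ip u u := by
          simp [ip]; try ring
        rw [hval, abs_le]; constructor <;> linarith
      · have hval : 2 * ip (-((1/2:ℝ) • (-u-v)) + -((1/2:ℝ) • v)) v = ip u v := by
          simp [ip]; try ring
        rw [hval, abs_le]; constructor <;> linarith
      · have hval : 2 * ip (-((1/2:ℝ) • (-u-v)) + -((1/2:ℝ) • v)) (-u-v)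
            = -(ip u u) - ip u v := by simp [ip]; try ring
        rw [hval, abs_le]; constructor <;> linarith
    · refine ⟨⟨⟨?_, ?_⟩, ?_⟩, ⟨?_, ?_⟩, ?_⟩ <;> simp only [Set.mem_setOf_eq] <;>
        rw [ip_add_left]
      · have hτ : ip ((1/2:ℝ) • v) u = ip u v / 2 := by simp [ip]; try ring
        rw [abs_le]; constructor <;> linarith [hm1u', hτ]
      · have hτ : ip ((1/2:ℝ) • v) v = ip v v / 2 := by simp [ip]; try ring
        rw [abs_le]; constructor <;> linarith [hm1v', hτ]
      · have hτ : ip ((1/2:ℝ) • v) (-u-v) = (-(ip u v) - ip v v) / 2 := by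
          simp [ip]; try ring
        rw [abs_le]; constructor <;> linarith [hm1w', hτ, hE]
      · have hτ : ip (-((1/2:ℝ) • (-u-v))) u = (ip u u + ip u v) / 2 := by
          simp [ip]; try ring
        rw [abs_le]; constructor <;> linarith [hm1u', hτ]
      · have hτ : ip (-((1/2:ℝ) • (-u-v))) v = (ip u v + ip v v) / 2 := by
          simp [ip]; try ring
        rw [abs_le]; constructor <;> linarith [hm1v', hτ]
      · have hτ : ip (-((1/2:ℝ) • (-u-v))) (-u-v)
            = -(ip u u + 2*ip u v + ip v v) / 2 := by simp [ip]; try ring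
        rw [abs_le]; constructor <;> linarith [hm1w', hτ, hE]
  intro x hx
  have hxS := (convexHull_min hpts hconv) hx
  obtain ⟨⟨⟨c1, c2⟩, c3⟩, ⟨c4, c5⟩, c6⟩ := hxS
  exact ⟨hex_mem u v _ huv huw hvw c1 c2 c3, hex_mem u v _ huv huw hvw c4 c5 c6⟩

end
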